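/- arXiv:2412.09882 — 3 statements merged into one kernel-verified Lean document; each statement's English description precedes it below -/
import Mathlib

section
/- Let d ≥ 1 and let μ_d be the measure r^{d−1}dr on (0,∞). Define R_1 f(r) = χ_{[2,∞)}(r) · sup_{t∈[1,2], t≤r/2} ∫_{r−t}^{r+t} |f(s)| ds. Then R_1 is bounded from L^p(μ_d) to L^q(μ_d) for all 1 ≤ p ≤ q ≤ ∞. -/
open Set MeasureTheory
open scoped ENNReal NNReal

noncomputable section

/-- The measure `μ_d` on `(0,∞)` with density `r^{d-1}`. -/
def mud (d : ℕ) : Measure ℝ :=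
  (volume.restrict (Ioi (0 : ℝ))).withDensity fun r => ENNReal.ofReal (r ^ (d - 1))

/-- The `L^p(μ)` norm of an `ℝ≥0∞`-valued function (with `p = ∞` meaning the
essential supremum). -/
def lpNormE (μ : Measure ℝ) (p : ℝ≥0∞) (g : ℝ → ℝ≥0∞) : ℝ≥0∞ :=
  if p = ∞ then essSup g μ else (∫⁻ r, g r ^ p.toReal ∂μ) ^ (1 / p.toReal)

/-- `R₁ f(r) = χ_{[2,∞)}(r) · sup_{t∈[1,2], t ≤ r/2} ∫_{r−t}^{r+t} |f(s)| ds`. -/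
def R1 (f : ℝ → ℝ) (r : ℝ) : ℝ≥0∞ :=
  if 2 ≤ r then
    ⨆ t ∈ {t : ℝ | t ∈ Icc (1 : ℝ) 2 ∧ t ≤ r / 2},
      ∫⁻ s in Icc (r - t) (r + t), ENNReal.ofReal |f s|
  else 0

/-!
Since `t ≤ r / 2` forces `r - t ≥ 1`, `R₁ f (r)` is at most the integral of `|f|` over the window
`[r - 2, r + 2] ∩ [1, ∞)`, which has length at most 4 and on which `μ_d` dominates Lebesgue
measure. Hölder's inequality on the window gives `R₁ f ≤ 4 ‖f‖_p` pointwise, hence `L^p → L^∞`.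
Raising that Hölder bound to the power `p` and swapping the integrals gives `L^p → L^p`, because
`μ_d([s - 2, s + 2]) ≤ 4 · 3^{d-1} s^{d-1}` for `s ≥ 1`. The remaining exponents follow from
`‖g‖_q ≤ max ‖g‖_∞ ‖g‖_p` for `p ≤ q`.
-/

open Metric

section Interpolation

variable {α ε : Type*} [MeasurableSpace α] {μ : Measure α} [TopologicalSpace ε] [ContinuousENorm ε]

theorem eLpNorm_le_max_eLpNorm_top {p q : ℝ≥0∞} (hp : p ≠ 0) (hpq : p ≤ q) (g : α → ε) :
    eLpNorm g q μ ≤ max (eLpNorm g ∞ μ) (eLpNorm g p μ) := by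
  rcases eq_or_ne q ∞ with rfl | hq
  · exact le_max_left _ _
  have hp' : p ≠ ∞ := ne_top_of_le_ne_top hq hpq
  set M := max (eLpNorm g ∞ μ) (eLpNorm g p μ)
  set P := p.toReal
  set Q := q.toReal
  have hP : 0 < P := ENNReal.toReal_pos hp hp'
  have hPQ : P ≤ Q := ENNReal.toReal_mono hq hpq
  have hQ : 0 < Q := hP.trans_le hPQ
  rcases eq_or_ne (eLpNorm g ∞ μ) ∞ with htop | htop
  · simp [M, htop]
  have hpow : ∫⁻ x, ‖g x‖ₑ ^ Q ∂μ ≤ M ^ Q := by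
    calc ∫⁻ x, ‖g x‖ₑ ^ Q ∂μ
        ≤ ∫⁻ x, eLpNorm g ∞ μ ^ (Q - P) * ‖g x‖ₑ ^ P ∂μ := by
          refine lintegral_mono_ae ((enorm_ae_le_eLpNormEssSup g μ).mono fun x hx => ?_)
          rw [← eLpNorm_exponent_top] at hx
          calc ‖g x‖ₑ ^ Q = ‖g x‖ₑ ^ (Q - P) * ‖g x‖ₑ ^ P := by
                rw [← ENNReal.rpow_add_of_nonneg _ _ (sub_nonneg.2 hPQ) hP.le, sub_add_cancel]
            _ ≤ _ := by gcongr
      _ = eLpNorm g ∞ μ ^ (Q - P) * eLpNorm g p μ ^ P := by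
          rw [lintegral_const_mul' _ _ (ENNReal.rpow_ne_top_of_nonneg (by linarith) htop),
            eLpNorm_eq_lintegral_rpow_enorm_toReal hp hp', one_div, ENNReal.rpow_inv_rpow hP.ne']
      _ ≤ M ^ (Q - P) * M ^ P :=
          mul_le_mul' (ENNReal.rpow_le_rpow (le_max_left _ _) (by linarith))
            (ENNReal.rpow_le_rpow (le_max_right _ _) hP.le)
      _ = M ^ Q := by
          rw [← ENNReal.rpow_add_of_nonneg _ _ (sub_nonneg.2 hPQ) hP.le, sub_add_cancel]
  rw [eLpNorm_eq_lintegral_rpow_enorm_toReal (hp.bot_lt.trans_le hpq).ne' hq, one_div,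
    ← ENNReal.rpow_le_rpow_iff hQ, ENNReal.rpow_inv_rpow hQ.ne']
  exact hpow

end Interpolation

theorem lpNormE_eq_eLpNorm (μ : Measure ℝ) {p : ℝ≥0∞} (hp : p ≠ 0) (g : ℝ → ℝ≥0∞) :
    lpNormE μ p g = eLpNorm g p μ := by
  rcases eq_or_ne p ∞ with rfl | hp'
  · simp [lpNormE, eLpNorm_exponent_top, eLpNormEssSup_eq_essSup_enorm]
  · simp [lpNormE, hp', eLpNorm_eq_lintegral_rpow_enorm_toReal hp hp']

section Mud

variable (d : ℕ)

theorem measurable_mud_density : Measurable fun r : ℝ => ENNReal.ofReal (r ^ (d - 1)) :=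
  (measurable_id.pow_const _).ennreal_ofReal

instance : SFinite (mud d) := by unfold mud; infer_instance

theorem setLIntegral_mud {s : Set ℝ} (hs : MeasurableSet s) (hs0 : s ⊆ Ioi 0) {h : ℝ → ℝ≥0∞}
    (hh : Measurable h) :
    ∫⁻ x in s, h x ∂mud d = ∫⁻ x in s, ENNReal.ofReal (x ^ (d - 1)) * h x := by
  rw [mud, setLIntegral_withDensity_eq_setLIntegral_mul _ (measurable_mud_density d) hh hs,
    Measure.restrict_restrict hs, inter_eq_left.2 hs0]
  rfl

theorem volume_restrict_Ici_one_le_mud : volume.restrict (Ici 1) ≤ mud d := by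
  refine Measure.le_iff.2 fun s hs => ?_
  have hs1 : MeasurableSet (s ∩ Ici 1) := hs.inter measurableSet_Ici
  have hs0 : s ∩ Ici 1 ⊆ Ioi 0 := fun x hx => mem_Ioi.2 (zero_lt_one.trans_le hx.2)
  calc volume.restrict (Ici 1) s = ∫⁻ _ in s ∩ Ici 1, 1 := by
        rw [setLIntegral_one, Measure.restrict_apply hs]
    _ ≤ ∫⁻ x in s ∩ Ici 1, ENNReal.ofReal (x ^ (d - 1)) * 1 :=
        setLIntegral_mono (by fun_prop) fun x hx => by
          simpa using one_le_pow₀ (M₀ := ℝ) (n := d - 1) hx.2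
    _ = mud d (s ∩ Ici 1) := by rw [← setLIntegral_mud d hs1 hs0 measurable_const, setLIntegral_one]
    _ ≤ mud d s := measure_mono inter_subset_left

theorem mud_closedBall_two_le {s : ℝ} (hs : 1 ≤ s) :
    mud d (closedBall s 2) ≤ 4 * 3 ^ (d - 1) * ENNReal.ofReal (s ^ (d - 1)) := by
  rw [mud, withDensity_apply _ measurableSet_closedBall,
    Measure.restrict_restrict measurableSet_closedBall]
  calc ∫⁻ x in closedBall s 2 ∩ Ioi 0, ENNReal.ofReal (x ^ (d - 1))
      ≤ ∫⁻ _ in closedBall s 2 ∩ Ioi 0, ENNReal.ofReal ((3 * s) ^ (d - 1)) := by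
        refine setLIntegral_mono measurable_const fun x ⟨hx, hx0⟩ => ?_
        rw [Real.closedBall_eq_Icc] at hx
        exact ENNReal.ofReal_le_ofReal (pow_le_pow_left₀ hx0.le (by linarith [hx.2]) _)
    _ ≤ ENNReal.ofReal ((3 * s) ^ (d - 1)) * volume (closedBall s 2) := by
        rw [setLIntegral_const]
        gcongr
        exact inter_subset_left
    _ = 4 * 3 ^ (d - 1) * ENNReal.ofReal (s ^ (d - 1)) := by
        rw [Real.volume_closedBall, mul_pow, ENNReal.ofReal_mul (by positivity),
          ENNReal.ofReal_pow (by norm_num : (0 : ℝ) ≤ 3)]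
        norm_num
        ring

theorem lintegral_setLIntegral_closedBall_le {h : ℝ → ℝ≥0∞} (hh : Measurable h) :
    ∫⁻ r, (∫⁻ s in closedBall r 2 ∩ Ici 1, h s) ∂mud d ≤ 4 * 3 ^ (d - 1) * ∫⁻ s, h s ∂mud d := by
  have hswap (r : ℝ) : ∫⁻ s in closedBall r 2 ∩ Ici 1, h s
      = ∫⁻ s in Ici 1, (closedBall s 2).indicator (fun _ => h s) r := by
    rw [← Measure.restrict_restrict measurableSet_closedBall,
      ← lintegral_indicator measurableSet_closedBall]
    refine lintegral_congr fun s => ?_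
    classical
    rw [indicator_apply, indicator_apply, mem_closedBall_comm]
  have hmeas :
      Measurable (Function.uncurry fun r s => (closedBall s 2).indicator (fun _ => h s) r) :=
    (hh.comp measurable_snd).indicator (measurableSet_le measurable_dist measurable_const)
  calc ∫⁻ r, (∫⁻ s in closedBall r 2 ∩ Ici 1, h s) ∂mud d
      = ∫⁻ s in Ici 1, ∫⁻ r, (closedBall s 2).indicator (fun _ => h s) r ∂mud d := by
        simp_rw [hswap]
        exact lintegral_lintegral_swap hmeas.aemeasurable
    _ = ∫⁻ s in Ici 1, h s * mud d (closedBall s 2) :=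
        lintegral_congr fun s => lintegral_indicator_const measurableSet_closedBall _
    _ ≤ ∫⁻ s in Ici 1, 4 * 3 ^ (d - 1) * (ENNReal.ofReal (s ^ (d - 1)) * h s) := by
        refine setLIntegral_mono' measurableSet_Ici fun s hs => ?_
        calc h s * mud d (closedBall s 2)
            ≤ h s * (4 * 3 ^ (d - 1) * ENNReal.ofReal (s ^ (d - 1))) := by
              gcongr; exact mud_closedBall_two_le d hs
          _ = _ := by ring
    _ = 4 * 3 ^ (d - 1) * ∫⁻ s in Ici 1, h s ∂mud d := by
        rw [lintegral_const_mul' _ _ (by finiteness),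
          setLIntegral_mud d measurableSet_Ici (fun x hx => mem_Ioi.2 (zero_lt_one.trans_le hx)) hh]
    _ ≤ 4 * 3 ^ (d - 1) * ∫⁻ s, h s ∂mud d := by
        gcongr
        exact Measure.restrict_le_self

end Mud

theorem R1_le_setLIntegral (f : ℝ → ℝ) (r : ℝ) :
    R1 f r ≤ ∫⁻ s in closedBall r 2 ∩ Ici 1, ENNReal.ofReal |f s| := by
  unfold R1
  split_ifs
  · refine iSup₂_le fun t ⟨⟨_, ht2⟩, htr⟩ => lintegral_mono_set fun s ⟨hs1, hs2⟩ => ?_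
    rw [Real.closedBall_eq_Icc]
    exact ⟨⟨by linarith, by linarith⟩, show 1 ≤ s by linarith⟩
  · exact zero_le

theorem R1_le_eLpNorm_restrict {p : ℝ≥0∞} (hp : 1 ≤ p) {f : ℝ → ℝ} (hf : Measurable f) (r : ℝ) :
    R1 f r ≤ 4 * eLpNorm (fun s => ENNReal.ofReal |f s|) p
      (volume.restrict (closedBall r 2 ∩ Ici 1)) := by
  set W := closedBall r 2 ∩ Ici (1 : ℝ)
  set e := 1 / (1 : ℝ≥0∞).toReal - 1 / p.toReal
  have he : e ∈ Icc 0 1 := by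
    rcases eq_or_ne p ∞ with rfl | hp'
    · simp [e]
    have hP : 1 ≤ p.toReal := by simpa using ENNReal.toReal_mono hp' hp
    constructor
    · simpa [e] using inv_le_one_of_one_le₀ hP
    · simp only [e, ENNReal.toReal_one, div_one, sub_le_self_iff]
      positivity
  have hW : volume W ^ e ≤ 4 := calc
    volume W ^ e ≤ 4 ^ e := by
      refine ENNReal.rpow_le_rpow ((measure_mono inter_subset_left).trans ?_) he.1
      rw [Real.volume_closedBall]
      norm_num
    _ ≤ 4 ^ (1 : ℝ) := ENNReal.rpow_le_rpow_of_exponent_le (by norm_num) he.2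
    _ = 4 := ENNReal.rpow_one 4
  calc R1 f r ≤ ∫⁻ s in W, ENNReal.ofReal |f s| := R1_le_setLIntegral f r
    _ = eLpNorm (fun s => ENNReal.ofReal |f s|) 1 (volume.restrict W) := by
        rw [eLpNorm_one_eq_lintegral_enorm]
        rfl
    _ ≤ eLpNorm (fun s => ENNReal.ofReal |f s|) p (volume.restrict W) * volume W ^ e := by
        rw [← Measure.restrict_apply_univ]
        exact eLpNorm_le_eLpNorm_mul_rpow_measure_univ hp hf.abs.ennreal_ofReal.aestronglyMeasurable
    _ ≤ 4 * eLpNorm (fun s => ENNReal.ofReal |f s|) p (volume.restrict W) := by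
        rw [mul_comm]
        gcongr

theorem eLpNorm_top_R1_le (d : ℕ) {p : ℝ≥0∞} (hp : 1 ≤ p) {f : ℝ → ℝ} (hf : Measurable f) :
    eLpNorm (R1 f) ∞ (mud d) ≤ 4 * eLpNorm (fun s => ENNReal.ofReal |f s|) p (mud d) := by
  rw [eLpNorm_exponent_top]
  refine eLpNormEssSup_le_of_ae_enorm_bound (Filter.Eventually.of_forall fun r => ?_)
  refine (R1_le_eLpNorm_restrict hp hf r).trans ?_
  gcongr
  exact (Measure.restrict_mono inter_subset_right le_rfl).trans (volume_restrict_Ici_one_le_mud d)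

theorem eLpNorm_R1_le (d : ℕ) {p : ℝ≥0∞} (hp : 1 ≤ p) {f : ℝ → ℝ} (hf : Measurable f) :
    eLpNorm (R1 f) p (mud d)
      ≤ 4 * (4 * 3 ^ (d - 1)) * eLpNorm (fun s => ENNReal.ofReal |f s|) p (mud d) := by
  set K : ℝ≥0∞ := 4 * 3 ^ (d - 1)
  have hK : 1 ≤ K := one_le_mul (by norm_num) (one_le_pow₀ (by norm_num))
  set F := fun s => ENNReal.ofReal |f s|
  rcases eq_or_ne p ∞ with rfl | hp'
  · refine (eLpNorm_top_R1_le d hp hf).trans ?_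
    rw [mul_assoc]
    gcongr
    exact le_mul_of_one_le_left' hK
  have hp0 : p ≠ 0 := (zero_lt_one.trans_le hp).ne'
  set P := p.toReal
  have hP : 1 ≤ P := by simpa using ENNReal.toReal_mono hp' hp
  have hP0 : 0 < P := zero_lt_one.trans_le hP
  have hpoint (r : ℝ) : R1 f r ^ P ≤ 4 ^ P * ∫⁻ s in closedBall r 2 ∩ Ici 1, F s ^ P := calc
    R1 f r ^ P ≤ (4 * eLpNorm F p (volume.restrict (closedBall r 2 ∩ Ici 1))) ^ P :=
      ENNReal.rpow_le_rpow (R1_le_eLpNorm_restrict hp hf r) hP0.le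
    _ = 4 ^ P * ∫⁻ s in closedBall r 2 ∩ Ici 1, F s ^ P := by
      rw [ENNReal.mul_rpow_of_nonneg _ _ hP0.le, eLpNorm_eq_lintegral_rpow_enorm_toReal hp0 hp',
        one_div, ENNReal.rpow_inv_rpow hP0.ne']
      rfl
  have hint : ∫⁻ r, R1 f r ^ P ∂mud d ≤ 4 ^ P * K * ∫⁻ s, F s ^ P ∂mud d := calc
    ∫⁻ r, R1 f r ^ P ∂mud d
        ≤ ∫⁻ r, 4 ^ P * (∫⁻ s in closedBall r 2 ∩ Ici 1, F s ^ P) ∂mud d := lintegral_mono hpoint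
    _ = 4 ^ P * ∫⁻ r, (∫⁻ s in closedBall r 2 ∩ Ici 1, F s ^ P) ∂mud d :=
      lintegral_const_mul' _ _ (by finiteness)
    _ ≤ 4 ^ P * (K * ∫⁻ s, F s ^ P ∂mud d) := by
      gcongr
      exact lintegral_setLIntegral_closedBall_le d (hf.abs.ennreal_ofReal.pow_const P)
    _ = 4 ^ P * K * ∫⁻ s, F s ^ P ∂mud d := (mul_assoc _ _ _).symm
  simp only [eLpNorm_eq_lintegral_rpow_enorm_toReal hp0 hp']
  calc (∫⁻ r, R1 f r ^ P ∂mud d) ^ (1 / P)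
      ≤ (4 ^ P * K * ∫⁻ s, F s ^ P ∂mud d) ^ (1 / P) := ENNReal.rpow_le_rpow hint (by positivity)
    _ = 4 * K ^ (1 / P) * (∫⁻ s, F s ^ P ∂mud d) ^ (1 / P) := by
      rw [ENNReal.mul_rpow_of_nonneg _ _ (by positivity),
        ENNReal.mul_rpow_of_nonneg _ _ (by positivity),
        ← ENNReal.rpow_mul, mul_one_div_cancel hP0.ne', ENNReal.rpow_one]
    _ ≤ 4 * K * (∫⁻ s, F s ^ P ∂mud d) ^ (1 / P) := by
      gcongr
      calc K ^ (1 / P) ≤ K ^ (1 : ℝ) :=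
            ENNReal.rpow_le_rpow_of_exponent_le hK ((div_le_one hP0).2 hP)
        _ = K := ENNReal.rpow_one K

theorem R1_Lp_improving_general (d : ℕ) (p q : ℝ≥0∞) (hp : 1 ≤ p) (hpq : p ≤ q) :
    ∃ C : ℝ≥0, ∀ f : ℝ → ℝ, Measurable f →
      lpNormE (mud d) q (R1 f) ≤ C * lpNormE (mud d) p (fun s => ENNReal.ofReal |f s|) := by
  refine ⟨16 * 3 ^ (d - 1), fun f hf => ?_⟩
  have hp0 : p ≠ 0 := (zero_lt_one.trans_le hp).ne'
  have hC : ((16 * 3 ^ (d - 1) : ℝ≥0) : ℝ≥0∞) = 4 * (4 * 3 ^ (d - 1)) := by push_cast; ring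
  rw [lpNormE_eq_eLpNorm _ (hp0.bot_lt.trans_le hpq).ne', lpNormE_eq_eLpNorm _ hp0, hC]
  calc eLpNorm (R1 f) q (mud d) ≤ max (eLpNorm (R1 f) ∞ (mud d)) (eLpNorm (R1 f) p (mud d)) :=
        eLpNorm_le_max_eLpNorm_top hp0 hpq _
    _ ≤ _ := by
      refine max_le ((eLpNorm_top_R1_le d hp hf).trans ?_) (eLpNorm_R1_le d hp hf)
      rw [mul_assoc]
      gcongr
      exact le_mul_of_one_le_left' (one_le_mul (by norm_num) (one_le_pow₀ (by norm_num)))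

theorem R1_Lp_improving (d : ℕ) (hd : 1 ≤ d) (p q : ℝ≥0∞) (hp : 1 ≤ p) (hpq : p ≤ q) :
    ∃ C : ℝ≥0, ∀ f : ℝ → ℝ, Measurable f →
      lpNormE (mud d) q (R1 f) ≤ C * lpNormE (mud d) p (fun s => ENNReal.ofReal |f s|) :=
  R1_Lp_improving_general d p q hp hpq
end
end

section
/- Let f be the characteristic function of the unit ball in ℝ^d centered at the origin, d ≥ 2. Then for |x| sufficiently large, the global spherical maximal function satisfies M_{(0,∞)} f(x) ≥ A_{|x|} f(x) ≥ c · |x|^{−(d−1)} for some constant c > 0 depending only on d. Consequently, if M_{(0,∞)} is bounded from L^{p_d,1}_{rad}(ℝ^d) to L^{p_d,s}(ℝ^d) with p_d = d/(d−1), then s = ∞. -/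
open Set MeasureTheory Metric
open scoped ENNReal NNReal

noncomputable section

/-- The normalized surface measure on the unit sphere of `ℝ^d`. -/
def sphMeasure (d : ℕ) : Measure (sphere (0 : EuclideanSpace ℝ (Fin d)) 1) :=
  (((volume : Measure (EuclideanSpace ℝ (Fin d))).toSphere univ)⁻¹) •
    (volume : Measure (EuclideanSpace ℝ (Fin d))).toSphere

/-- Spherical average (of the absolute value) at radius `t`. -/
def sphAvg (d : ℕ) (f : EuclideanSpace ℝ (Fin d) → ℝ) (t : ℝ)
    (x : EuclideanSpace ℝ (Fin d)) : ℝ≥0∞ :=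
  ∫⁻ y : sphere (0 : EuclideanSpace ℝ (Fin d)) 1,
    ENNReal.ofReal |f (x - t • (y : EuclideanSpace ℝ (Fin d)))| ∂(sphMeasure d)

/-- The global spherical maximal operator `M_{(0,∞)}`. -/
def sphMaxGlobal (d : ℕ) (f : EuclideanSpace ℝ (Fin d) → ℝ)
    (x : EuclideanSpace ℝ (Fin d)) : ℝ≥0∞ :=
  ⨆ t ∈ Ioi (0 : ℝ), sphAvg d f t x

/-- The Lorentz `L^{p,s}` quasinorm (for finite `s`). -/
def lorentzNorm {α : Type*} [MeasurableSpace α] (μ : Measure α) (p s : ℝ)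
    (g : α → ℝ≥0∞) : ℝ≥0∞ :=
  (∫⁻ l in Ioi (0 : ℝ),
    ENNReal.ofReal (l ^ (s - 1)) * (μ {x | ENNReal.ofReal l < g x}) ^ (s / p)) ^ (1 / s)

/-- Characteristic function of the unit ball. -/
def ballInd (d : ℕ) (x : EuclideanSpace ℝ (Fin d)) : ℝ :=
  if ‖x‖ ≤ 1 then 1 else 0

open Filter
open scoped Pointwise Topology

/-! The sphere of radius `‖x‖` about `x` meets the unit ball in a spherical cap of radius
`‖x‖⁻¹`. The cone over such a cap contains a rotated box of size `1/4 × (‖x‖⁻¹/(4√d))^(d-1)`,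
so the cap has normalized measure `≳ ‖x‖^{-(d-1)}`, and this bounds `A_{‖x‖} f(x)` from below.
Consequently `M f > l` on an annulus of radius `≈ l^{-1/(d-1)}`, the distribution function of
`M f` is `≳ l^{-p_d}`, and the Lorentz integral `∫ l^{s-1} λ(l)^{s/p_d} dl` diverges like
`∫ dl/l` at `0`; meanwhile `‖f‖_{L^{p_d,1}} = |B(0,1)|^{1/p_d}` is finite. -/

lemma mem_Ioo_smul_sphere_inter_closedBall {F : Type*} [NormedAddCommGroup F] [NormedSpace ℝ F]
    {e z : F} (he : ‖e‖ = 1) {a δ : ℝ} (ha : a ∈ Icc (1 / 2 : ℝ) (3 / 4)) (hδ : δ ≤ 1)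
    (hz : ‖z - a • e‖ ≤ δ / 8) :
    z ∈ Ioo (0 : ℝ) 1 • (sphere (0 : F) 1 ∩ closedBall e δ) := by
  have hae : ‖a • e‖ = a := by
    rw [norm_smul, he, mul_one, Real.norm_of_nonneg (by linarith [ha.1])]
  have hnorm : |‖z‖ - a| ≤ δ / 8 := hae ▸ (abs_norm_sub_norm_le z (a • e)).trans hz
  have hδ0 : 0 ≤ δ := by linarith [norm_nonneg (z - a • e)]
  have hz0 : 3 / 8 ≤ ‖z‖ := by linarith [(abs_le.1 hnorm).1, ha.1]
  have hz1 : ‖z‖ < 1 := by linarith [(abs_le.1 hnorm).2, ha.2]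
  have hz : 0 < ‖z‖ := by linarith
  refine ⟨‖z‖, ⟨hz, hz1⟩, ‖z‖⁻¹ • z, ⟨?_, ?_⟩, smul_inv_smul₀ hz.ne' z⟩
  · simp [norm_smul, hz.ne']
  have hdev : ‖z - ‖z‖ • e‖ ≤ δ / 4 := calc
    ‖z - ‖z‖ • e‖ = ‖(z - a • e) + (a - ‖z‖) • e‖ := by rw [sub_smul]; abel_nf
    _ ≤ ‖z - a • e‖ + |a - ‖z‖| := by
        grw [norm_add_le, norm_smul, he, mul_one, Real.norm_eq_abs]
    _ ≤ δ / 4 := by rw [abs_sub_comm]; linarith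
  rw [mem_closedBall, dist_eq_norm]
  calc ‖‖z‖⁻¹ • z - e‖ = ‖‖z‖⁻¹ • (z - ‖z‖ • e)‖ := by
        rw [smul_sub, smul_smul, inv_mul_cancel₀ hz.ne', one_smul]
    _ = ‖z‖⁻¹ * ‖z - ‖z‖ • e‖ := by rw [norm_smul, norm_inv, norm_norm]
    _ ≤ (8 / 3) * (δ / 4) := by
        gcongr
        rw [inv_le_comm₀ hz (by norm_num)]
        linarith
    _ ≤ δ := by linarith

lemma EuclideanSpace.norm_le_sqrt_card_mul {ι : Type*} [Fintype ι] {v : EuclideanSpace ℝ ι}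
    {r : ℝ} (hr : 0 ≤ r) (hv : ∀ i, |v i| ≤ r) : ‖v‖ ≤ √(Fintype.card ι) * r := by
  rw [EuclideanSpace.norm_eq, ← Real.sqrt_sq hr, ← Real.sqrt_mul (by positivity)]
  refine Real.sqrt_le_sqrt ?_
  calc ∑ i, ‖v i‖ ^ 2 ≤ ∑ _i : ι, r ^ 2 := by
        gcongr with i
        simpa using hv i
    _ = _ := by simp

lemma exists_ofReal_mul_pow_le_toSphere_cap (ι : Type*) [Fintype ι] [Nonempty ι] :
    ∃ c > 0, ∀ e : EuclideanSpace ℝ ι, ‖e‖ = 1 → ∀ δ : ℝ, 0 < δ → δ ≤ 1 →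
      ENNReal.ofReal (c * δ ^ (Fintype.card ι - 1)) ≤
        (volume : Measure (EuclideanSpace ℝ ι)).toSphere ((↑) ⁻¹' closedBall e δ) := by
  classical
  set n := Fintype.card ι
  let i₀ : ι := Classical.arbitrary ι
  refine ⟨1 / 4 * (4 * √n)⁻¹ ^ (n - 1), by positivity, fun e he δ hδ0 hδ1 => ?_⟩
  set r := δ / (8 * √n)
  -- a box of length `1/4` in direction `i₀` and width `2r` in the others, rotated onto `e`
  let I : ι → Set ℝ := fun i => if i = i₀ then Icc (1 / 2) (3 / 4) else Icc (-r) r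
  let B : Set (EuclideanSpace ℝ ι) := (MeasurableEquiv.toLp 2 (ι → ℝ)).symm ⁻¹' univ.pi I
  have hpi : MeasurableSet (univ.pi I) :=
    MeasurableSet.univ_pi fun i => by simp only [I]; split_ifs <;> exact measurableSet_Icc
  have hB : MeasurableSet B := hpi.preimage (MeasurableEquiv.measurable _)
  have hBvol : volume B = ENNReal.ofReal (1 / 4 * (4 * √n)⁻¹ ^ (n - 1) * δ ^ (n - 1)) := by
    have hI : ∀ i ∈ ({i₀}ᶜ : Finset ι), volume (I i) = ENNReal.ofReal (2 * r) := fun i hi => by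
      have hi : i ≠ i₀ := by simpa using hi
      simp [I, hi, two_mul]
    rw [(EuclideanSpace.volume_preserving_symm_measurableEquiv_toLp ι).measure_preimage
        hpi.nullMeasurableSet, volume_pi_pi, Fintype.prod_eq_mul_prod_compl i₀,
      Finset.prod_congr rfl hI, Finset.prod_const, Finset.card_compl, Finset.card_singleton]
    simp only [I, if_pos, Real.volume_Icc]
    rw [← ENNReal.ofReal_pow (by positivity), ← ENNReal.ofReal_mul (by norm_num)]
    congr 1
    simp only [r, mul_assoc, ← mul_pow]
    norm_num
    ring
  obtain ⟨T, hT⟩ : ∃ T : EuclideanSpace ℝ ι ≃ₗᵢ[ℝ] EuclideanSpace ℝ ι,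
      T (EuclideanSpace.single i₀ 1) = e :=
    ⟨_, Submodule.reflection_sub (by simp [he])⟩
  have hTB : T '' B ⊆ Ioo (0 : ℝ) 1 • (sphere 0 1 ∩ closedBall e δ) := by
    rintro - ⟨b, hb, rfl⟩
    simp only [B, mem_preimage, mem_univ_pi] at hb
    refine mem_Ioo_smul_sphere_inter_closedBall he (a := b i₀) (by simpa [I] using hb i₀) hδ1 ?_
    rw [← hT, ← map_smul, ← map_sub, T.norm_map]
    calc ‖b - b i₀ • EuclideanSpace.single i₀ 1‖ ≤ √n * r := by
          refine EuclideanSpace.norm_le_sqrt_card_mul (by positivity) fun i => ?_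
          by_cases hi : i = i₀
          · simp [hi]
            positivity
          · simpa [hi, I, abs_le] using hb i
      _ = δ / 8 := by
          have : 0 < √n := Real.sqrt_pos.2 (by exact_mod_cast Fintype.card_pos)
          simp only [r]
          field_simp
  calc ENNReal.ofReal (1 / 4 * (4 * √n)⁻¹ ^ (n - 1) * δ ^ (n - 1))
      = volume (T '' B) := by
        rw [← hBvol, T.image_eq_preimage_symm, T.symm.measurePreserving.measure_preimage
          hB.nullMeasurableSet]
    _ ≤ volume (Ioo (0 : ℝ) 1 • (sphere 0 1 ∩ closedBall e δ)) := measure_mono hTB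
    _ ≤ n * volume (Ioo (0 : ℝ) 1 • (sphere 0 1 ∩ closedBall e δ)) :=
        le_mul_of_one_le_left bot_le (by exact_mod_cast Fintype.card_pos)
    _ = _ := by
        rw [Measure.toSphere_apply' _ (measurableSet_closedBall.preimage measurable_subtype_coe),
          Subtype.image_preimage_coe, finrank_euclideanSpace]

lemma exists_ofReal_mul_pow_le_sphMeasure_cap {d : ℕ} (hd : 0 < d) :
    ∃ c > 0, ∀ e : EuclideanSpace ℝ (Fin d), ‖e‖ = 1 → ∀ δ : ℝ, 0 < δ → δ ≤ 1 →
      ENNReal.ofReal (c * δ ^ (d - 1)) ≤ sphMeasure d ((↑) ⁻¹' closedBall e δ) := by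
  have : Nonempty (Fin d) := ⟨⟨0, hd⟩⟩
  obtain ⟨c, hc, hcap⟩ := exists_ofReal_mul_pow_le_toSphere_cap (Fin d)
  set σ := (volume : Measure (EuclideanSpace ℝ (Fin d))).toSphere
  have hσ : 0 < (σ univ).toReal :=
    ENNReal.toReal_pos (Measure.measure_univ_ne_zero.2 (Measure.toSphere_ne_zero _))
      (measure_ne_top _ _)
  refine ⟨c / (σ univ).toReal, div_pos hc hσ, fun e he δ hδ0 hδ1 => ?_⟩
  calc ENNReal.ofReal (c / (σ univ).toReal * δ ^ (d - 1))
      = ENNReal.ofReal (c * δ ^ (d - 1)) / σ univ := by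
        rw [div_mul_eq_mul_div, ENNReal.ofReal_div_of_pos hσ,
          ENNReal.ofReal_toReal (measure_ne_top _ _)]
    _ ≤ σ ((↑) ⁻¹' closedBall e δ) / σ univ := by
        gcongr
        simpa using hcap e he δ hδ0 hδ1
    _ = _ := by rw [sphMeasure, Measure.smul_apply, smul_eq_mul, ENNReal.div_eq_inv_mul]

lemma ofReal_abs_ballInd (d : ℕ) (x : EuclideanSpace ℝ (Fin d)) :
    ENNReal.ofReal |ballInd d x| = (closedBall 0 1).indicator 1 x := by
  by_cases hx : ‖x‖ ≤ 1 <;> simp [ballInd, hx]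

lemma sphAvg_ballInd (d : ℕ) (t : ℝ) (x : EuclideanSpace ℝ (Fin d)) :
    sphAvg d (ballInd d) t x =
      sphMeasure d {y | ‖x - t • (y : EuclideanSpace ℝ (Fin d))‖ ≤ 1} := by
  have hmeas : MeasurableSet {y : sphere (0 : EuclideanSpace ℝ (Fin d)) 1 |
      ‖x - t • (y : EuclideanSpace ℝ (Fin d))‖ ≤ 1} :=
    (isClosed_le (by fun_prop) continuous_const).measurableSet
  rw [sphAvg, ← lintegral_indicator_one hmeas]
  congr 1 with y
  rw [ofReal_abs_ballInd]
  simp [indicator]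

lemma exists_ofReal_mul_rpow_le_sphAvg_ballInd {d : ℕ} (hd : 0 < d) :
    ∃ c > 0, ∀ x : EuclideanSpace ℝ (Fin d), 1 ≤ ‖x‖ →
      ENNReal.ofReal (c * ‖x‖ ^ (-(d - 1 : ℝ))) ≤ sphAvg d (ballInd d) ‖x‖ x := by
  obtain ⟨c, hc, hcap⟩ := exists_ofReal_mul_pow_le_sphMeasure_cap hd
  refine ⟨c, hc, fun x hx => ?_⟩
  have hx0 : 0 < ‖x‖ := by linarith
  have hpow : ‖x‖ ^ (-(d - 1 : ℝ)) = ‖x‖⁻¹ ^ (d - 1) := by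
    rw [Real.rpow_neg hx0.le, ← Nat.cast_one, ← Nat.cast_sub hd, Real.rpow_natCast, inv_pow]
  have hcap_sub : ((↑) ⁻¹' closedBall (‖x‖⁻¹ • x) ‖x‖⁻¹ :
      Set (sphere (0 : EuclideanSpace ℝ (Fin d)) 1)) ⊆
        {y | ‖x - ‖x‖ • (y : EuclideanSpace ℝ (Fin d))‖ ≤ 1} := by
    intro y hy
    rw [mem_preimage, mem_closedBall, dist_eq_norm, norm_sub_rev] at hy
    calc ‖x - ‖x‖ • (y : EuclideanSpace ℝ (Fin d))‖
        = ‖‖x‖ • (‖x‖⁻¹ • x - y)‖ := by rw [smul_sub, smul_inv_smul₀ hx0.ne']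
      _ = ‖x‖ * ‖‖x‖⁻¹ • x - y‖ := by rw [norm_smul, norm_norm]
      _ ≤ 1 := by
          grw [hy, mul_inv_cancel₀ hx0.ne']
  rw [hpow, sphAvg_ballInd]
  refine (hcap _ ?_ _ (inv_pos.2 hx0) (inv_le_one_of_one_le₀ hx)).trans (measure_mono hcap_sub)
  rw [norm_smul, norm_inv, norm_norm, inv_mul_cancel₀ hx0.ne']

lemma sphAvg_le_sphMaxGlobal {d : ℕ} (f : EuclideanSpace ℝ (Fin d) → ℝ) {t : ℝ} (ht : 0 < t)
    (x : EuclideanSpace ℝ (Fin d)) : sphAvg d f t x ≤ sphMaxGlobal d f x :=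
  le_iSup₂ (f := fun t (_ : t ∈ Ioi 0) => sphAvg d f t x) t ht

lemma lintegral_Ioo_zero_ofReal_inv_eq_top {a : ℝ} (ha : 0 < a) :
    ∫⁻ l in Ioo 0 a, ENNReal.ofReal l⁻¹ = ∞ := by
  by_contra hfin
  have hint : IntegrableOn (fun l : ℝ => l ^ (-1 : ℝ)) (Ioo 0 a) := by
    simp_rw [Real.rpow_neg_one]
    refine ⟨by fun_prop, (hasFiniteIntegral_iff_ofReal ?_).2 (lt_top_iff_ne_top.2 hfin)⟩
    filter_upwards [ae_restrict_mem measurableSet_Ioo] with l hl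
    exact inv_nonneg.2 hl.1.le
  exact lt_irrefl _ ((intervalIntegral.integrableOn_Ioo_rpow_iff ha).1 hint)

lemma lorentzNorm_eq_top_of_le_distribution {α : Type*} [MeasurableSpace α] (μ : Measure α)
    {p s : ℝ} (hp : 0 < p) (hs : 0 < s) {g : α → ℝ≥0∞} {K : ℝ≥0∞} (hK : K ≠ 0)
    (hg : ∀ᶠ l in 𝓝[>] 0, K * ENNReal.ofReal (l ^ (-p)) ≤ μ {x | ENNReal.ofReal l < g x}) :
    lorentzNorm μ p s g = ∞ := by
  obtain ⟨a, ha, hsub⟩ := mem_nhdsGT_iff_exists_Ioo_subset.1 hg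
  have hKs : K ^ (s / p) ≠ 0 := by
    simp [ENNReal.rpow_eq_zero_iff, hK, (div_pos hs hp).not_gt]
  have hpoint : ∀ l ∈ Ioo 0 a, K ^ (s / p) * ENNReal.ofReal l⁻¹ ≤
      ENNReal.ofReal (l ^ (s - 1)) * μ {x | ENNReal.ofReal l < g x} ^ (s / p) := by
    intro l hl
    have hl0 : 0 < l := hl.1
    have hpow : l ^ (s - 1) * (l ^ (-p)) ^ (s / p) = l⁻¹ := by
      rw [← Real.rpow_mul hl0.le, ← Real.rpow_add hl0, ← Real.rpow_neg_one]
      congr 1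
      field_simp
      ring
    calc K ^ (s / p) * ENNReal.ofReal l⁻¹
        = ENNReal.ofReal (l ^ (s - 1)) * (K * ENNReal.ofReal (l ^ (-p))) ^ (s / p) := by
          rw [ENNReal.mul_rpow_of_nonneg _ _ (div_pos hs hp).le,
            ENNReal.ofReal_rpow_of_nonneg (by positivity) (div_pos hs hp).le, ← hpow,
            ENNReal.ofReal_mul (by positivity)]
          ring
      _ ≤ _ := by gcongr; exact hsub hl
  have hint : ∫⁻ l in Ioi 0, ENNReal.ofReal (l ^ (s - 1)) *
      μ {x | ENNReal.ofReal l < g x} ^ (s / p) = ∞ := by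
    refine top_unique ?_
    calc ∞ = K ^ (s / p) * ∫⁻ l in Ioo 0 a, ENNReal.ofReal l⁻¹ := by
          rw [lintegral_Ioo_zero_ofReal_inv_eq_top ha, ENNReal.mul_top hKs]
      _ = ∫⁻ l in Ioo 0 a, K ^ (s / p) * ENNReal.ofReal l⁻¹ :=
          (lintegral_const_mul _ (by fun_prop)).symm
      _ ≤ ∫⁻ l in Ioo 0 a, ENNReal.ofReal (l ^ (s - 1)) *
            μ {x | ENNReal.ofReal l < g x} ^ (s / p) :=
          setLIntegral_mono' measurableSet_Ioo hpoint
      _ ≤ _ := lintegral_mono_set Ioo_subset_Ioi_self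
  rw [lorentzNorm, hint, ENNReal.top_rpow_of_pos (by positivity)]

lemma lorentzNorm_indicator_one {α : Type*} [MeasurableSpace α] (μ : Measure α) {p : ℝ}
    (hp : 0 < p) (S : Set α) : lorentzNorm μ p 1 (S.indicator 1) = μ S ^ (1 / p) := by
  have hlevel : ∀ l ∈ Ioi (0 : ℝ), ENNReal.ofReal (l ^ ((1 : ℝ) - 1)) *
      μ {x | ENNReal.ofReal l < S.indicator 1 x} ^ (1 / p) =
        (Iio 1).indicator (fun _ => μ S ^ (1 / p)) l := by
    intro l hl
    rw [sub_self, Real.rpow_zero, ENNReal.ofReal_one, one_mul]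
    by_cases hl1 : l < 1
    · have : {x | ENNReal.ofReal l < S.indicator 1 x} = S := by
        ext x
        by_cases hx : x ∈ S <;> simp [hx, hl1]
      rw [this, indicator_of_mem (show l ∈ Iio 1 from hl1)]
    · have : {x | ENNReal.ofReal l < S.indicator 1 x} = ∅ := by
        ext x
        by_cases hx : x ∈ S <;> simp [hx, not_lt.1 hl1]
      rw [this, indicator_of_notMem (show l ∉ Iio 1 from hl1), measure_empty,
        ENNReal.zero_rpow_of_pos (by positivity)]
  rw [lorentzNorm, setLIntegral_congr_fun measurableSet_Ioi hlevel,
    lintegral_indicator measurableSet_Iio, Measure.restrict_restrict measurableSet_Iio,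
    setLIntegral_const, Iio_inter_Ioi, Real.volume_Ioo]
  simp

lemma exists_le_distribution_of_ge_rpow_neg {E : Type*} [NormedAddCommGroup E]
    [NormedSpace ℝ E] [MeasurableSpace E] [BorelSpace E] [FiniteDimensional ℝ E] [Nontrivial E]
    (μ : Measure E) [μ.IsAddHaarMeasure] {q c R : ℝ} (hq : 0 < q) (hc : 0 < c)
    {g : E → ℝ≥0∞} (hg : ∀ x, R ≤ ‖x‖ → ENNReal.ofReal (c * ‖x‖ ^ (-q)) ≤ g x) :
    ∃ K ≠ 0, ∀ᶠ l in 𝓝[>] 0, K * ENNReal.ofReal (l ^ (-(Module.finrank ℝ E / q))) ≤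
      μ {x | ENNReal.ofReal l < g x} := by
  set n := Module.finrank ℝ E
  -- at level `l` the lower bound for `g` exceeds `l` on the ball of radius `ρ l`
  set ρ : ℝ → ℝ := fun l => (c / l) ^ (1 / q)
  have hρ : Tendsto ρ (𝓝[>] 0) atTop :=
    (tendsto_rpow_atTop (one_div_pos.2 hq)).comp
      (tendsto_inv_nhdsGT_zero.const_mul_atTop hc |>.congr fun l => by simp [div_eq_mul_inv])
  refine ⟨μ (ball 0 1) * ENNReal.ofReal (c ^ (n / q) / 2),
    mul_ne_zero (measure_ball_pos μ 0 one_pos).ne' (by simp; positivity), ?_⟩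
  filter_upwards [self_mem_nhdsWithin, hρ.eventually_ge_atTop (2 * R)] with l hl hRl
  have hl : 0 < l := hl
  have hρpos : 0 < ρ l := by positivity
  have hρq : ρ l ^ (-q) = l / c := by
    rw [← Real.rpow_mul (by positivity), one_div_mul_eq_div, neg_div, div_self hq.ne',
      Real.rpow_neg_one, inv_div]
  have hρn : ρ l ^ n = c ^ (n / q) * l ^ (-(n / q)) := by
    rw [← Real.rpow_natCast, ← Real.rpow_mul (by positivity), Real.div_rpow hc.le hl.le,
      Real.rpow_neg hl.le, div_eq_mul_inv, one_div_mul_eq_div]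
  have hsub : ball 0 (ρ l) \ ball 0 (ρ l / 2) ⊆ {x | ENNReal.ofReal l < g x} := by
    rintro x ⟨hxρ, hxρ2⟩
    rw [mem_ball_zero_iff] at hxρ
    rw [mem_ball_zero_iff, not_lt] at hxρ2
    have hx : 0 < ‖x‖ := by linarith
    have hlt : l < c * ‖x‖ ^ (-q) := by
      calc l = c * ρ l ^ (-q) := by rw [hρq]; field_simp
        _ < c * ‖x‖ ^ (-q) :=
          mul_lt_mul_of_pos_left (Real.rpow_lt_rpow_of_neg hx hxρ (neg_lt_zero.2 hq)) hc
    exact (ENNReal.ofReal_lt_ofReal_iff (by positivity)).2 hlt |>.trans_le (hg x (by linarith))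
  have hhalf : (ρ l / 2) ^ n ≤ ρ l ^ n / 2 := by
    rw [div_pow]
    gcongr
    exact le_self_pow₀ one_le_two Module.finrank_pos.ne'
  calc μ (ball 0 1) * ENNReal.ofReal (c ^ (n / q) / 2) * ENNReal.ofReal (l ^ (-(n / q)))
      = ENNReal.ofReal (ρ l ^ n - ρ l ^ n / 2) * μ (ball 0 1) := by
        rw [show ρ l ^ n - ρ l ^ n / 2 = c ^ (n / q) / 2 * l ^ (-(n / q)) by rw [hρn]; ring,
          ENNReal.ofReal_mul (by positivity)]
        ring
    _ ≤ ENNReal.ofReal (ρ l ^ n - (ρ l / 2) ^ n) * μ (ball 0 1) := by gcongr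
    _ = μ (ball 0 (ρ l)) - μ (ball 0 (ρ l / 2)) := by
        rw [μ.addHaar_ball 0 hρpos.le, μ.addHaar_ball (r := ρ l / 2) 0 (by positivity),
          ← ENNReal.sub_mul fun _ _ => measure_ball_lt_top.ne, ENNReal.ofReal_sub _ (by positivity)]
    _ ≤ μ (ball 0 (ρ l) \ ball 0 (ρ l / 2)) := le_measure_sdiff
    _ ≤ _ := measure_mono hsub

theorem global_spherical_maximal_ball_lower_bound (d : ℕ) (hd : 2 ≤ d) :
    (∃ c : ℝ, 0 < c ∧ ∃ R : ℝ, 1 ≤ R ∧ ∀ x : EuclideanSpace ℝ (Fin d), R ≤ ‖x‖ →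
      ENNReal.ofReal (c * ‖x‖ ^ (-(d - 1 : ℝ))) ≤ sphAvg d (ballInd d) ‖x‖ x ∧
      sphAvg d (ballInd d) ‖x‖ x ≤ sphMaxGlobal d (ballInd d) x) ∧
    (∀ s : ℝ, 0 < s →
      ¬ ∃ C : ℝ≥0, ∀ f : EuclideanSpace ℝ (Fin d) → ℝ,
        (∀ x y, ‖x‖ = ‖y‖ → f x = f y) →
        lorentzNorm (volume : Measure (EuclideanSpace ℝ (Fin d)))
            ((d : ℝ) / (d - 1)) s (sphMaxGlobal d f) ≤
          C * lorentzNorm (volume : Measure (EuclideanSpace ℝ (Fin d)))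
            ((d : ℝ) / (d - 1)) 1 (fun x => ENNReal.ofReal |f x|)) := by
  have hd0 : 0 < d := by omega
  have : Nonempty (Fin d) := ⟨⟨0, hd0⟩⟩
  have hq : (0 : ℝ) < d - 1 := by
    rw [sub_pos, Nat.one_lt_cast]
    omega
  have hp : (0 : ℝ) < d / (d - 1) := div_pos (by positivity) hq
  obtain ⟨c, hc, havg⟩ := exists_ofReal_mul_rpow_le_sphAvg_ballInd hd0
  have hmax : ∀ x : EuclideanSpace ℝ (Fin d), 1 ≤ ‖x‖ →
      ENNReal.ofReal (c * ‖x‖ ^ (-(d - 1 : ℝ))) ≤ sphMaxGlobal d (ballInd d) x := fun x hx =>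
    (havg x hx).trans (sphAvg_le_sphMaxGlobal _ (by linarith) x)
  refine ⟨⟨c, hc, 1, le_rfl, fun x hx =>
    ⟨havg x hx, sphAvg_le_sphMaxGlobal _ (by linarith) x⟩⟩, fun s hs ⟨C, hC⟩ => ?_⟩
  obtain ⟨K, hK, hdist⟩ := exists_le_distribution_of_ge_rpow_neg volume hq hc hmax
  rw [finrank_euclideanSpace_fin] at hdist
  have hlhs := lorentzNorm_eq_top_of_le_distribution volume hp hs hK hdist
  have hrhs := lorentzNorm_indicator_one (volume : Measure (EuclideanSpace ℝ (Fin d))) hp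
    (closedBall 0 1)
  have hball := hC (ballInd d) fun x y hxy => by simp only [ballInd, hxy]
  simp_rw [hlhs, ofReal_abs_ballInd, hrhs, top_le_iff] at hball
  exact ENNReal.mul_ne_top ENNReal.coe_ne_top
    (ENNReal.rpow_ne_top_of_nonneg (by positivity) measure_closedBall_lt_top.ne) hball
end
end

section
/- One-dimensional square-root kernel bound: let 0 ≤ A < B and let à ⊆ (A,B) be measurable. Then ∫_Ã [(z²−A²)(B²−z²)]^{−1/2} · z dz ≤ C · ( (1/(B²−A²)) · ∫_Ã z dz )^{1/2} for an absolute constant C independent of A, B, Ã. -/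
open Set MeasureTheory
open scoped ENNReal NNReal

/-!
Substituting `u = z ^ 2` turns the left-hand side into half of
`∫_T ((u - A²) (B² - u)) ^ (-1/2) du`, where `T = {z ^ 2 | z ∈ S}` has measure `2 ∫_S z dz`.
On `(a, b)` the larger of `u - a` and `b - u` is at least `(b - a) / 2`, so this kernel is at most
`((b - a) / 2) ^ (-1/2) ((u - a) ^ (-1/2) + (b - u) ^ (-1/2))`. Finally, a set `E ⊆ (0, ∞)`
carries at most `∫_0^|E| u ^ (-1/2) du + |E| ^ (-1/2) |E| = 3 |E| ^ (1/2)` of `u ^ (-1/2)`: split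
`E` at `|E|`, integrate over all of `(0, |E|]` near the singularity and bound the integrand by
`|E| ^ (-1/2)` away from it.
-/

theorem lintegral_Ioc_rpow {p : ℝ} (hp : -1 < p) {r : ℝ} (hr : 0 ≤ r) :
    ∫⁻ u in Ioc 0 r, ENNReal.ofReal (u ^ p) = ENNReal.ofReal (r ^ (p + 1) / (p + 1)) := by
  have hint : IntegrableOn (fun u : ℝ => u ^ p) (Ioc 0 r) :=
    (intervalIntegrable_iff_integrableOn_Ioc_of_le hr).mp
      (intervalIntegral.intervalIntegrable_rpow' hp)
  rw [← ofReal_integral_eq_lintegral_ofReal hint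
      (ae_restrict_of_forall_mem measurableSet_Ioc fun u hu => Real.rpow_nonneg hu.1.le p),
    ← intervalIntegral.integral_of_le hr, integral_rpow (Or.inl hp),
    Real.zero_rpow (by linarith), sub_zero]

theorem lintegral_rpow_le_of_subset_Ioi {p : ℝ} (hp1 : -1 < p) (hp0 : p ≤ 0) {T : Set ℝ}
    (hT : MeasurableSet T) (hT0 : T ⊆ Ioi 0) :
    ∫⁻ u in T, ENNReal.ofReal (u ^ p) ≤ ENNReal.ofReal (1 + (p + 1)⁻¹) * volume T ^ (p + 1) := by
  have hq : 0 < p + 1 := by linarith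
  rcases eq_or_ne (volume T) 0 with h0 | h0
  · simp [Measure.restrict_eq_zero.mpr h0]
  rcases eq_or_ne (volume T) ∞ with htop | htop
  · rw [htop, ENNReal.top_rpow_of_pos hq,
      ENNReal.mul_top (ENNReal.ofReal_pos.mpr (by positivity)).ne']
    exact le_top
  set r := (volume T).toReal
  have hr : 0 < r := ENNReal.toReal_pos h0 htop
  have hvol : volume T = ENNReal.ofReal r := (ENNReal.ofReal_toReal htop).symm
  have hnear : ∫⁻ u in T ∩ Ioc 0 r, ENNReal.ofReal (u ^ p) ≤
      ENNReal.ofReal (r ^ (p + 1) / (p + 1)) :=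
    (lintegral_mono_set inter_subset_right).trans (lintegral_Ioc_rpow hp1 hr.le).le
  have hfar : ∫⁻ u in T \ Ioc 0 r, ENNReal.ofReal (u ^ p) ≤ ENNReal.ofReal (r ^ (p + 1)) := by
    calc ∫⁻ u in T \ Ioc 0 r, ENNReal.ofReal (u ^ p)
        ≤ ∫⁻ _ in T \ Ioc 0 r, ENNReal.ofReal (r ^ p) := by
          refine setLIntegral_mono' (hT.diff measurableSet_Ioc) fun u hu => ?_
          have hru : r < u := not_le.mp fun h => hu.2 ⟨hT0 hu.1, h⟩
          exact ENNReal.ofReal_le_ofReal (Real.rpow_le_rpow_of_nonpos hr hru.le hp0)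
      _ ≤ ENNReal.ofReal (r ^ p) * ENNReal.ofReal r := by
          rw [setLIntegral_const, ← hvol]
          gcongr
          exact sdiff_subset
      _ = ENNReal.ofReal (r ^ (p + 1)) := by
          rw [← ENNReal.ofReal_mul (by positivity), Real.rpow_add_one hr.ne']
  calc ∫⁻ u in T, ENNReal.ofReal (u ^ p)
      = (∫⁻ u in T ∩ Ioc 0 r, ENNReal.ofReal (u ^ p)) +
          ∫⁻ u in T \ Ioc 0 r, ENNReal.ofReal (u ^ p) :=
        (lintegral_inter_add_sdiff _ _ measurableSet_Ioc).symm
    _ ≤ ENNReal.ofReal (r ^ (p + 1) / (p + 1)) + ENNReal.ofReal (r ^ (p + 1)) :=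
        add_le_add hnear hfar
    _ = ENNReal.ofReal (1 + (p + 1)⁻¹) * volume T ^ (p + 1) := by
        rw [← ENNReal.ofReal_add (by positivity) (by positivity), hvol,
          ENNReal.ofReal_rpow_of_pos hr, ← ENNReal.ofReal_mul (by positivity)]
        ring_nf

theorem lintegral_rpow_comp_le {p : ℝ} (hp1 : -1 < p) (hp0 : p ≤ 0) {g : ℝ → ℝ}
    (hg : MeasurePreserving g volume volume) (hge : MeasurableEmbedding g) {T : Set ℝ}
    (hT : MeasurableSet T) (hgT : MapsTo g T (Ioi 0)) :
    ∫⁻ u in T, ENNReal.ofReal (g u ^ p) ≤ ENNReal.ofReal (1 + (p + 1)⁻¹) * volume T ^ (p + 1) := by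
  have h := lintegral_rpow_le_of_subset_Ioi hp1 hp0 (hge.measurableSet_image' hT) hgT.image_subset
  rwa [← hg.setLIntegral_comp_emb hge (fun y => ENNReal.ofReal (y ^ p)),
    ← hg.measure_preimage_emb hge (g '' T), preimage_image_eq _ hge.injective] at h

theorem rpow_sub_mul_sub_le {p : ℝ} (hp0 : p ≤ 0) {a b u : ℝ} (hau : a < u) (hub : u < b) :
    ((u - a) * (b - u)) ^ p ≤ ((b - a) / 2) ^ p * ((u - a) ^ p + (b - u) ^ p) := by
  have hua : 0 < u - a := sub_pos.mpr hau
  have hbu : 0 < b - u := sub_pos.mpr hub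
  have hL : 0 < (b - a) / 2 := by linarith
  have hx := Real.rpow_nonneg hua.le p
  have hy := Real.rpow_nonneg hbu.le p
  have hK := Real.rpow_nonneg hL.le p
  rw [Real.mul_rpow hua.le hbu.le]
  rcases le_total (u - a) (b - u) with h | h
  · have : (b - u) ^ p ≤ ((b - a) / 2) ^ p := Real.rpow_le_rpow_of_nonpos hL (by linarith) hp0
    nlinarith
  · have : (u - a) ^ p ≤ ((b - a) / 2) ^ p := Real.rpow_le_rpow_of_nonpos hL (by linarith) hp0
    nlinarith

theorem lintegral_rpow_sub_mul_sub_le {p : ℝ} (hp1 : -1 < p) (hp0 : p ≤ 0) {a b : ℝ} {T : Set ℝ}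
    (hT : MeasurableSet T) (hTab : T ⊆ Ioo a b) :
    ∫⁻ u in T, ENNReal.ofReal (((u - a) * (b - u)) ^ p) ≤
      2 * ENNReal.ofReal (1 + (p + 1)⁻¹) * ENNReal.ofReal (((b - a) / 2) ^ p) *
        volume T ^ (p + 1) := by
  set c := ENNReal.ofReal (1 + (p + 1)⁻¹)
  set K := ENNReal.ofReal (((b - a) / 2) ^ p)
  have hleft : ∫⁻ u in T, ENNReal.ofReal ((u - a) ^ p) ≤ c * volume T ^ (p + 1) :=
    lintegral_rpow_comp_le hp1 hp0 (measurePreserving_sub_right volume a)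
      (measurableEmbedding_subRight a) hT fun u hu => sub_pos.mpr (hTab hu).1
  have hright : ∫⁻ u in T, ENNReal.ofReal ((b - u) ^ p) ≤ c * volume T ^ (p + 1) :=
    lintegral_rpow_comp_le hp1 hp0 (Measure.measurePreserving_sub_left volume b)
      (measurableEmbedding_subLeft b) hT fun u hu => sub_pos.mpr (hTab hu).2
  calc ∫⁻ u in T, ENNReal.ofReal (((u - a) * (b - u)) ^ p)
      ≤ ∫⁻ u in T, K * (ENNReal.ofReal ((u - a) ^ p) + ENNReal.ofReal ((b - u) ^ p)) := by
        refine setLIntegral_mono' hT fun u hu => ?_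
        have hua := sub_pos.mpr (hTab hu).1
        have hbu := sub_pos.mpr (hTab hu).2
        rw [← ENNReal.ofReal_add (Real.rpow_nonneg hua.le p) (Real.rpow_nonneg hbu.le p),
          ← ENNReal.ofReal_mul (Real.rpow_nonneg (by linarith) p)]
        exact ENNReal.ofReal_le_ofReal (rpow_sub_mul_sub_le hp0 (hTab hu).1 (hTab hu).2)
    _ = K * ((∫⁻ u in T, ENNReal.ofReal ((u - a) ^ p)) +
          ∫⁻ u in T, ENNReal.ofReal ((b - u) ^ p)) := by
        rw [lintegral_const_mul' _ _ ENNReal.ofReal_ne_top, lintegral_add_left (by fun_prop)]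
    _ ≤ K * (c * volume T ^ (p + 1) + c * volume T ^ (p + 1)) := by gcongr
    _ = 2 * c * K * volume T ^ (p + 1) := by ring

theorem lintegral_image_sq {S : Set ℝ} (hS : MeasurableSet S) (hS0 : S ⊆ Ici 0)
    (g : ℝ → ℝ≥0∞) :
    ∫⁻ u in (· ^ 2) '' S, g u = 2 * ∫⁻ z in S, ENNReal.ofReal z * g (z ^ 2) := by
  rw [lintegral_image_eq_lintegral_abs_deriv_mul hS (f' := fun z => 2 * z)
    (fun z _ => by simpa using (hasDerivAt_pow 2 z).hasDerivWithinAt)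
    ((pow_left_strictMonoOn₀ two_ne_zero).injOn.mono hS0),
    ← lintegral_const_mul' _ _ ENNReal.ofNat_ne_top]
  refine setLIntegral_congr_fun hS fun z hz => ?_
  rw [abs_of_nonneg (mul_nonneg zero_le_two (hS0 hz)), ENNReal.ofReal_mul zero_le_two,
    ENNReal.ofReal_ofNat, mul_assoc]

theorem ENNReal.ofReal_div_two_rpow_neg_half_mul {L : ℝ} (hL : 0 < L) (x : ℝ≥0∞) :
    ENNReal.ofReal ((L / 2) ^ (-(1 / 2) : ℝ)) * (2 * x) ^ (1 / 2 : ℝ) =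
      2 * (x / ENNReal.ofReal L) ^ (1 / 2 : ℝ) := by
  have h4 : (4 : ℝ≥0∞) ^ (1 / 2 : ℝ) = 2 := by
    rw [show (4 : ℝ≥0∞) = 2 ^ (2 : ℝ) by norm_num, ← ENNReal.rpow_mul]
    norm_num
  calc ENNReal.ofReal ((L / 2) ^ (-(1 / 2) : ℝ)) * (2 * x) ^ (1 / 2 : ℝ)
      = (2 / ENNReal.ofReal L * (2 * x)) ^ (1 / 2 : ℝ) := by
        rw [← ENNReal.ofReal_rpow_of_pos (by positivity), ENNReal.rpow_neg, ← ENNReal.inv_rpow,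
          ← ENNReal.ofReal_inv_of_pos (by positivity), inv_div, ENNReal.ofReal_div_of_pos hL,
          ENNReal.ofReal_ofNat, ← ENNReal.mul_rpow_of_nonneg _ _ (by norm_num)]
    _ = (4 * (x / ENNReal.ofReal L)) ^ (1 / 2 : ℝ) := by
        congr 1
        simp only [div_eq_mul_inv]
        ring
    _ = 2 * (x / ENNReal.ofReal L) ^ (1 / 2 : ℝ) := by
        rw [ENNReal.mul_rpow_of_nonneg _ _ (by norm_num), h4]

theorem sqrt_kernel_bound :
    ∃ C : ℝ≥0, ∀ A B : ℝ, 0 ≤ A → A < B → ∀ S : Set ℝ, MeasurableSet S → S ⊆ Ioo A B →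
      (∫⁻ z in S, ENNReal.ofReal (((z ^ 2 - A ^ 2) * (B ^ 2 - z ^ 2)) ^ (-(1 / 2 : ℝ)) * z)) ≤
        C * ((∫⁻ z in S, ENNReal.ofReal z) / ENNReal.ofReal (B ^ 2 - A ^ 2))
          ^ (1 / 2 : ℝ) := by
  refine ⟨6, fun A B hA hAB S hS hSAB => ?_⟩
  have hS0 : S ⊆ Ici 0 := fun z hz => hA.trans (hSAB hz).1.le
  set T := (· ^ 2) '' S
  have hTm : MeasurableSet T :=
    hS.image_of_continuousOn_injOn (continuous_pow 2).continuousOn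
      ((pow_left_strictMonoOn₀ two_ne_zero).injOn.mono hS0)
  have hTAB : T ⊆ Ioo (A ^ 2) (B ^ 2) := by
    rintro _ ⟨z, hz, rfl⟩
    obtain ⟨hAz, hzB⟩ := hSAB hz
    constructor <;> nlinarith
  have hkernel : ∫⁻ u in T, ENNReal.ofReal (((u - A ^ 2) * (B ^ 2 - u)) ^ (-(1 / 2 : ℝ))) =
      2 * ∫⁻ z in S,
        ENNReal.ofReal (((z ^ 2 - A ^ 2) * (B ^ 2 - z ^ 2)) ^ (-(1 / 2 : ℝ)) * z) := by
    rw [lintegral_image_sq hS hS0]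
    congr 1
    refine setLIntegral_congr_fun hS fun z hz => ?_
    rw [ENNReal.ofReal_mul' (hS0 hz), mul_comm]
  have hvol : volume T = 2 * ∫⁻ z in S, ENNReal.ofReal z := by
    simp [← setLIntegral_one, T, lintegral_image_sq hS hS0]
  have hbound :=
    lintegral_rpow_sub_mul_sub_le (p := -(1 / 2)) (by norm_num) (by norm_num) hTm hTAB
  rw [hkernel, hvol, show -(1 / 2 : ℝ) + 1 = 1 / 2 by norm_num, mul_assoc _ (ENNReal.ofReal _),
    ENNReal.ofReal_div_two_rpow_neg_half_mul (by nlinarith)] at hbound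
  refine (ENNReal.mul_le_mul_iff_right two_ne_zero ENNReal.ofNat_ne_top).mp (hbound.trans_eq ?_)
  norm_num
  ring
end
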